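/- arXiv:2208.12803 — 4 statements merged into one kernel-verified Lean document; each statement's English description precedes it below -/
import Mathlib

section
/- Let (H,s,t) be a two-rooted graph that is inherent, and let H' be any graph vertex-disjoint from H. Then the two-rooted graph (H + H', s, t), where H + H' denotes the disjoint union of H and H', is also inherent. -/
/-!
Let `f` be a copy of `H + H'` in `G` and let `B` be the image of `H'`. The image of `H` lies in
the graph `G[W]`, `W := V ∖ N[B]`, so inherence of `H` yields a copy `g` of `H` in `G[W]` that is
avoidable there. Together with `B`, `g` is again a copy of `H + H'` in `G`. Pendant vertices of an
extension of this copy are neither in nor adjacent to `B`, so they lie in `W` and extend `g` in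
`G[W]`; the closing path found in `G[W]` stays in `W`, hence avoids `N[B]`, and so closes the
extension in `G`.
-/

open SimpleGraph

/-- Closed neighborhood of a vertex set. -/
def closedNbhd {V : Type*} (G : SimpleGraph V) (S : Set V) : Set V :=
  S ∪ {v | ∃ u ∈ S, G.Adj u v}

/-- Open neighborhood of a vertex set. -/
def openNbhd {V : Type*} (G : SimpleGraph V) (S : Set V) : Set V :=
  {v | v ∉ S ∧ ∃ u ∈ S, G.Adj u v}

/-- A walk that is an induced path. -/
def IsInducedPathW {V : Type*} (G : SimpleGraph V) {a b : V} (p : G.Walk a b) : Prop :=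
  p.IsPath ∧ ∀ u ∈ p.support, ∀ v ∈ p.support, G.Adj u v → s(u, v) ∈ p.edges

/-- The extension with pendant vertices `s'`, `t'` attached to a copy with vertex set `S`
is closable: there is an induced `s',t'`-path meeting `N[S ∪ {s',t'}]` only in `s'` and `t'`. -/
def Closable {V : Type*} (G : SimpleGraph V) (S : Set V) (s' t' : V) : Prop :=
  ∃ p : G.Walk s' t', IsInducedPathW G p ∧
    ∀ v ∈ p.support, v ∈ closedNbhd G (S ∪ {s', t'}) → v = s' ∨ v = t'

/-- `f` realizes an induced copy of `H` in `G`. -/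
def IsCopy {V α : Type*} (G : SimpleGraph V) (H : SimpleGraph α) (f : α → V) : Prop :=
  Function.Injective f ∧ ∀ x y : α, H.Adj x y ↔ G.Adj (f x) (f y)

/-- `(s', t')` is an extension of the copy `f` of the two-rooted graph `(H, s, t)` in `G`:
two pendant edges at the images of the roots. -/
def IsExtension {V α : Type*} (G : SimpleGraph V) (H : SimpleGraph α) (f : α → V)
    (s t : α) (s' t' : V) : Prop :=
  s' ≠ t' ∧ (∀ x, f x ≠ s') ∧ (∀ x, f x ≠ t') ∧ ¬ G.Adj s' t' ∧
  G.Adj (f s) s' ∧ G.Adj (f t) t' ∧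
  (∀ x, f x ≠ f s → ¬ G.Adj (f x) s') ∧ (∀ x, f x ≠ f t → ¬ G.Adj (f x) t')

/-- An avoidable copy of the two-rooted graph `(H, s, t)` in `G`. -/
def AvoidableCopy {V α : Type*} (G : SimpleGraph V) (H : SimpleGraph α) (f : α → V)
    (s t : α) : Prop :=
  IsCopy G H f ∧ ∀ s' t' : V, IsExtension G H f s t s' t' →
    Closable G (Set.range f) s' t'

/-- The two-rooted graph `(H, s, t)` is inherent. -/
def Inherent {α : Type} [Fintype α] (H : SimpleGraph α) (s t : α) : Prop :=
  ∀ (V : Type) (_ : Fintype V) (G : SimpleGraph V),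
    (∃ f : α → V, IsCopy G H f) → ∃ f : α → V, AvoidableCopy G H f s t

/-- `G` confines the two-rooted graph `(H, s, t)`. -/
def Confines {V α : Type*} (G : SimpleGraph V) (H : SimpleGraph α) (s t : α) : Prop :=
  (∃ f : α → V, IsCopy G H f) ∧ ∀ f : α → V, ¬ AvoidableCopy G H f s t

/-- `G` contains an induced path on three vertices. -/
def HasInducedP3 {V : Type*} (G : SimpleGraph V) : Prop :=
  ∃ x y z : V, G.Adj x y ∧ G.Adj y z ∧ x ≠ z ∧ ¬ G.Adj x z

section

variable {V V' α β : Type*}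

lemma closedNbhd_union (G : SimpleGraph V) (S T : Set V) :
    closedNbhd G (S ∪ T) = closedNbhd G S ∪ closedNbhd G T := by
  ext v
  simp only [closedNbhd, Set.mem_union, Set.mem_ofPred_eq, or_and_right, exists_or]
  exact or_or_or_comm

lemma val_mem_closedNbhd_image_iff (G : SimpleGraph V) {W : Set V} (X : Set W) (w : W) :
    (w : V) ∈ closedNbhd G (Subtype.val '' X) ↔ w ∈ closedNbhd (G.induce W) X := by
  constructor
  · rintro (⟨u, hu, huw⟩ | ⟨_, ⟨u, hu, rfl⟩, huw⟩)
    · exact Or.inl (Subtype.val_injective huw ▸ hu)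
    · exact Or.inr ⟨u, hu, huw⟩
  · rintro (hw | ⟨u, hu, huw⟩)
    · exact Or.inl ⟨w, hw, rfl⟩
    · exact Or.inr ⟨u, ⟨u, hu, rfl⟩, huw⟩

namespace IsCopy

variable {G : SimpleGraph V} {H : SimpleGraph α} {f : α → V}

lemma embedding_comp {G' : SimpleGraph V'} (e : G ↪g G') (hf : IsCopy G H f) :
    IsCopy G' H (e ∘ f) :=
  ⟨e.injective.comp hf.1, fun x y => (hf.2 x y).trans e.map_adj_iff.symm⟩

lemma comp_embedding {K : SimpleGraph β} (hf : IsCopy G H f) (e : K ↪g H) :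
    IsCopy G K (f ∘ e) :=
  ⟨hf.1.comp e.injective, fun x y => e.map_adj_iff.symm.trans (hf.2 (e x) (e y))⟩

lemma codRestrict (hf : IsCopy G H f) {W : Set V} (hW : ∀ x, f x ∈ W) :
    IsCopy (G.induce W) H (Set.codRestrict f W hW) :=
  ⟨fun _ _ hxy => hf.1 (congrArg Subtype.val hxy), hf.2⟩

lemma sumElim {H' : SimpleGraph β} {f' : β → V} (hf : IsCopy G H f) (hf' : IsCopy G H' f')
    (hff' : ∀ x, f x ∉ closedNbhd G (Set.range f')) :
    IsCopy G (H ⊕g H') (Sum.elim f f') := by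
  refine ⟨hf.1.sumElim hf'.1 fun x y h => hff' x (Or.inl ⟨y, h.symm⟩), ?_⟩
  rintro (x | y) (x' | y')
  · simpa using hf.2 x x'
  · simpa using fun h => hff' x (Or.inr ⟨f' y', ⟨y', rfl⟩, h.symm⟩)
  · simpa using fun h => hff' x' (Or.inr ⟨f' y, ⟨y, rfl⟩, h⟩)
  · simpa using hf'.2 y y'

lemma inl_notMem_closedNbhd_range_inr {H' : SimpleGraph β} {f : α ⊕ β → V}
    (hf : IsCopy G (H ⊕g H') f) (x : α) :
    f (.inl x) ∉ closedNbhd G (Set.range (f ∘ Sum.inr)) := by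
  rintro (⟨y, hy⟩ | ⟨_, ⟨y, rfl⟩, hadj⟩)
  · exact Sum.inr_ne_inl (hf.1 hy)
  · simpa using (hf.2 (.inr y) (.inl x)).mpr hadj

end IsCopy

namespace IsExtension

variable {G : SimpleGraph V} {s' t' : V}

lemma symm {H : SimpleGraph α} {f : α → V} {s t : α} (h : IsExtension G H f s t s' t') :
    IsExtension G H f t s t' s' :=
  let ⟨hne, hs, ht, hadj, hss, htt, hos, hot⟩ := h
  ⟨hne.symm, ht, hs, fun h' => hadj h'.symm, htt, hss, hot, hos⟩

lemma of_sumElim {H : SimpleGraph α} {H' : SimpleGraph β} {f : α → V} {f' : β → V} {s t : α}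
    (h : IsExtension G (H ⊕g H') (Sum.elim f f') (.inl s) (.inl t) s' t') :
    IsExtension G H f s t s' t' :=
  let ⟨hne, hs, ht, hadj, hss, htt, hos, hot⟩ := h
  ⟨hne, fun x => hs (.inl x), fun x => ht (.inl x), hadj, hss, htt,
    fun x => hos (.inl x), fun x => hot (.inl x)⟩

lemma notMem_closedNbhd_range_inr {K : SimpleGraph (α ⊕ β)} {f : α → V} {f' : β → V}
    {s t : α} (h : IsExtension G K (Sum.elim f f') (.inl s) (.inl t) s' t')
    (hs : f s ∉ Set.range f') : s' ∉ closedNbhd G (Set.range f') := by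
  obtain ⟨-, hs', -, -, -, -, hos, -⟩ := h
  rintro (⟨y, rfl⟩ | ⟨_, ⟨y, rfl⟩, hadj⟩)
  · exact hs' (.inr y) rfl
  · exact hos (.inr y) (fun h' => hs ⟨y, h'⟩) hadj

lemma induce {H : SimpleGraph α} {W : Set V} {f : α → W} {s t : α} {s' t' : W}
    (h : IsExtension G H (Subtype.val ∘ f) s t s' t') :
    IsExtension (G.induce W) H f s t s' t' :=
  let ⟨hne, hs, ht, hadj, hss, htt, hos, hot⟩ := h
  ⟨fun h' => hne (congrArg Subtype.val h'), fun x h' => hs x (congrArg Subtype.val h'),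
    fun x h' => ht x (congrArg Subtype.val h'), hadj, hss, htt,
    fun x h' => hos x fun h'' => h' (Subtype.val_injective h''),
    fun x h' => hot x fun h'' => h' (Subtype.val_injective h'')⟩

end IsExtension

lemma IsInducedPathW.map {G : SimpleGraph V} {G' : SimpleGraph V'} (e : G ↪g G') {a b : V}
    {p : G.Walk a b} (hp : IsInducedPathW G p) : IsInducedPathW G' (p.map e.toHom) := by
  refine ⟨hp.1.map e.injective, ?_⟩
  simp only [Walk.support_map, Walk.edges_map, List.mem_map]
  rintro _ ⟨u, hu, rfl⟩ _ ⟨v, hv, rfl⟩ huv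
  exact ⟨s(u, v), hp.2 u hu v hv (e.map_adj_iff.mp huv), rfl⟩

lemma Closable.of_induce {G : SimpleGraph V} {W : Set V} {S : Set W} {T : Set V} {s' t' : W}
    (h : Closable (G.induce W) S s' t') (hT : ∀ w ∈ W, w ∉ closedNbhd G T) :
    Closable G (Subtype.val '' S ∪ T) s' t' := by
  obtain ⟨p, hp, hpN⟩ := h
  refine ⟨p.map (Embedding.induce W).toHom, hp.map _, ?_⟩
  intro v hv hvN
  obtain ⟨w, hw, rfl⟩ := List.mem_map.mp (Walk.support_map _ p ▸ hv)
  have hsplit : Subtype.val '' S ∪ T ∪ {(s' : V), (t' : V)} =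
      Subtype.val '' (S ∪ {s', t'}) ∪ T := by
    simp only [Set.image_union, Set.image_insert_eq, Set.image_singleton]
    exact Set.union_right_comm _ _ _
  rw [hsplit, closedNbhd_union] at hvN
  have hwS : w ∈ closedNbhd (G.induce W) (S ∪ {s', t'}) :=
    (val_mem_closedNbhd_image_iff G _ w).mp (hvN.resolve_right (hT w w.2))
  exact (hpN w hw hwS).imp (congrArg Subtype.val) (congrArg Subtype.val)

end

/-- if `(H, s, t)` is inherent then so is `(H + H', s, t)` for any graph `H'`
disjoint from `H` (disjoint union). -/
theorem stmt_3 {α β : Type} [Fintype α] [Fintype β]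
    (H : SimpleGraph α) (H' : SimpleGraph β) (s t : α)
    (hinh : Inherent H s t) :
    Inherent (H ⊕g H') (Sum.inl s) (Sum.inl t) := by
  rintro V _ G ⟨f, hf⟩
  set W : Set V := (closedNbhd G (Set.range (f ∘ Sum.inr)))ᶜ
  obtain ⟨g, hg, hgav⟩ := hinh W (Fintype.ofFinite W) (G.induce W)
    ⟨_, (hf.comp_embedding Embedding.sumInl).codRestrict hf.inl_notMem_closedNbhd_range_inr⟩
  refine ⟨Sum.elim (Subtype.val ∘ g) (f ∘ Sum.inr),
    (hg.embedding_comp (Embedding.induce W)).sumElim (hf.comp_embedding Embedding.sumInr)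
      fun x => (g x).2, fun s' t' hext => ?_⟩
  have hs' : s' ∈ W := hext.notMem_closedNbhd_range_inr fun h => (g s).2 (Or.inl h)
  have ht' : t' ∈ W := hext.symm.notMem_closedNbhd_range_inr fun h => (g t).2 (Or.inl h)
  have hclose := (hgav ⟨s', hs'⟩ ⟨t', ht'⟩ hext.of_sumElim.induce).of_induce
    (T := Set.range (f ∘ Sum.inr)) fun _ hw => hw
  rwa [Set.Sum.elim_range, Set.range_comp]
end

section
/- Let G be a finite graph with a sequence of avoiding bags B_1,...,B_m with core vertex set B_0 (the vertices outside all closed neighborhoods of the bags), chosen of lexicographically maximal rank (|B_1|,...,|B_m|) among all sequences of avoiding bags, in a minimal counterexample setting for T3(1,0). Then for any vertex x in B_0, every connected component of the core C minus N_C[x] is a complete graph. -/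
open SimpleGraph

/-- The core vertex set of a sequence of bags: vertices outside all closed neighborhoods. -/
def coreSet {V : Type} (G : SimpleGraph V) (B : List (Finset V)) : Set V :=
  {v | ∀ Bi ∈ B, v ∉ closedNbhd G (↑Bi : Set V)}

/-- A sequence of avoiding bags in `G`. -/
def IsAvoidingBags {V : Type} [Fintype V] (G : SimpleGraph V) (B : List (Finset V)) : Prop :=
  (∀ Bi ∈ B, Bi.Nonempty ∧ (G.induce (↑Bi : Set V)).Connected) ∧
  List.Pairwise (fun Bi Bj =>
    (↑Bi : Set V) ∩ closedNbhd G (↑Bj : Set V) = ∅ ∧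
    (↑Bj : Set V) ∩ closedNbhd G (↑Bi : Set V) = ∅) B ∧
  HasInducedP3 (G.induce (coreSet G B))

/-!
Appending the singleton bag `{x}` to `B` keeps the bag
conditions and shrinks the core to `C − N_C[x]`. Two nonadjacent vertices in one component of
`C − N_C[x]` are joined by a walk there, which yields an induced `P₃`; so `B ++ [{x}]` would be a
sequence of avoiding bags whose rank strictly extends that of `B`.
-/

lemma hasInducedP3_of_walk {V : Type*} {G : SimpleGraph V} {u v : V} (p : G.Walk u v)
    (hne : u ≠ v) (hadj : ¬ G.Adj u v) : HasInducedP3 G := by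
  induction p with
  | nil => exact absurd rfl hne
  | @cons a b c hab q ih =>
    by_cases hbc : G.Adj b c
    · exact ⟨a, b, c, hab, hbc, hne, hadj⟩
    · obtain rfl | hbc' := eq_or_ne b c
      · exact absurd hab hadj
      · exact ih hbc' hbc

lemma SimpleGraph.Reachable.hasInducedP3 {V : Type*} {G : SimpleGraph V} {u v : V}
    (h : G.Reachable u v) (hne : u ≠ v) (hadj : ¬ G.Adj u v) : HasInducedP3 G :=
  h.elim fun p => hasInducedP3_of_walk p hne hadj

lemma List.lex_append_singleton {α : Type*} (r : α → α → Prop) (l : List α) (a : α) :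
    List.Lex r l (l ++ [a]) := by
  simpa using List.Lex.append_left r (List.Lex.nil (a := a) (l := [])) l

lemma mem_closedNbhd_singleton {V : Type*} {G : SimpleGraph V} {x w : V} :
    w ∈ closedNbhd G {x} ↔ w = x ∨ G.Adj x w := by
  simp [closedNbhd]

lemma coreSet_append_singleton {V : Type} (G : SimpleGraph V) (B : List (Finset V)) (x : V) :
    coreSet G (B ++ [{x}]) = {w | w ∈ coreSet G B ∧ w ≠ x ∧ ¬ G.Adj x w} := by
  ext w
  simp [coreSet, or_imp, forall_and, mem_closedNbhd_singleton]

lemma IsAvoidingBags.append_singleton {V : Type} [Fintype V] {G : SimpleGraph V}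
    {B : List (Finset V)} (hB : IsAvoidingBags G B) {x : V} (hx : x ∈ coreSet G B)
    (hP3 : HasInducedP3 (G.induce {w | w ∈ coreSet G B ∧ w ≠ x ∧ ¬ G.Adj x w})) :
    IsAvoidingBags G (B ++ [{x}]) := by
  obtain ⟨hconn, hpw, -⟩ := hB
  refine ⟨?_, ?_, by rwa [coreSet_append_singleton]⟩
  · intro Bi hBi
    rcases List.mem_append.mp hBi with hBi | hBi
    · exact hconn Bi hBi
    · obtain rfl := List.mem_singleton.mp hBi
      rw [Finset.coe_singleton, induce_singleton_eq_top]
      exact ⟨Finset.singleton_nonempty x, connected_top⟩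
  · rw [bind_pure_comp, List.map_eq_map, List.pairwise_map] at hpw ⊢
    refine List.pairwise_append.mpr ⟨hpw, List.pairwise_singleton _ _, ?_⟩
    intro Bi hBi b hb
    obtain rfl := List.mem_singleton.mp hb
    have hxBi : x ∉ closedNbhd G (↑Bi : Set V) := hx Bi hBi
    constructor
    · ext w
      simp only [Finset.coe_singleton, Set.mem_inter_iff, Finset.mem_coe,
        mem_closedNbhd_singleton, Set.mem_empty_iff_false, iff_false, not_and]
      rintro hw (rfl | hxw)
      · exact hxBi (Or.inl hw)
      · exact hxBi (Or.inr ⟨w, hw, hxw.symm⟩)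
    · ext w
      simp only [Finset.coe_singleton, Set.mem_inter_iff, Set.mem_singleton_iff,
        Set.mem_empty_iff_false, iff_false, not_and]
      rintro rfl
      exact hxBi

theorem stmt_6_general {V : Type} [Fintype V] (G : SimpleGraph V)
    (B : List (Finset V)) (hB : IsAvoidingBags G B)
    (hmax : ∀ B' : List (Finset V), IsAvoidingBags G B' →
      ¬ List.Lex (· < ·) (B.map Finset.card) (B'.map Finset.card))
    (x : V) (hx : x ∈ coreSet G B) :
    ∀ (u v : V) (hu : u ∈ coreSet G B ∧ u ≠ x ∧ ¬ G.Adj x u)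
      (hv : v ∈ coreSet G B ∧ v ≠ x ∧ ¬ G.Adj x v),
      (G.induce {w | w ∈ coreSet G B ∧ w ≠ x ∧ ¬ G.Adj x w}).Reachable ⟨u, hu⟩ ⟨v, hv⟩ →
      u ≠ v → G.Adj u v := by
  intro u v hu hv hreach hne
  by_contra hadj
  have hP3 := hreach.hasInducedP3 (fun h => hne (congrArg Subtype.val h)) (by simpa using hadj)
  refine hmax _ (hB.append_singleton hx hP3) ?_
  rw [List.map_append]
  exact List.lex_append_singleton _ _ _

/-- in a minimal counterexample `G` for `T₃(1,0)`, if `B` is a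
lexicographically-rank-maximal sequence of avoiding bags with core `C`, then for every
vertex `x` of the core, every connected component of `C − N_C[x]` is complete. -/
theorem stmt_6 {V : Type} [Fintype V] (G : SimpleGraph V)
    (hP3 : HasInducedP3 G)
    (hnoavoid : ∀ f : Fin 3 → V, ¬ AvoidableCopy G (SimpleGraph.pathGraph 3) f 0 1)
    (hmin : ∀ (W : Type) (_ : Fintype W) (G' : SimpleGraph W),
      Fintype.card W < Fintype.card V → HasInducedP3 G' →
      ∃ f : Fin 3 → W, AvoidableCopy G' (SimpleGraph.pathGraph 3) f 0 1)
    (B : List (Finset V)) (hB : IsAvoidingBags G B) (hBne : B ≠ [])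
    (hmax : ∀ B' : List (Finset V), IsAvoidingBags G B' →
      ¬ List.Lex (· < ·) (B.map Finset.card) (B'.map Finset.card))
    (x : V) (hx : x ∈ coreSet G B) :
    ∀ (u v : V) (hu : u ∈ coreSet G B ∧ u ≠ x ∧ ¬ G.Adj x u)
      (hv : v ∈ coreSet G B ∧ v ≠ x ∧ ¬ G.Adj x v),
      (G.induce {w | w ∈ coreSet G B ∧ w ≠ x ∧ ¬ G.Adj x w}).Reachable ⟨u, hu⟩ ⟨v, hv⟩ →
      u ≠ v → G.Adj u v :=
  stmt_6_general G B hB hmax x hx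
end

section
/- In any finite graph C in which for every vertex x each connected component of C − N_C[x] is a clique, if a-b-c is an induced P3 and a*-a-b-c and a-b-c-c* are induced P4s with a* ≠ c*, then a* and c* are adjacent, so {a*,a,b,c,c*} induces a 5-cycle. -/
open SimpleGraph

/-- in a graph in which, for every vertex `x`, each connected component of
`C − N_C[x]` is a clique, if `a*-a-b-c` and `a-b-c-c*` are induced `P₄`s with `a* ≠ c*`,
then `a*c*` is an edge, so `{a*, a, b, c, c*}` induces a 5-cycle. -/
theorem stmt_9 {V : Type} [Fintype V] (C : SimpleGraph V)
    (hcc : ∀ x : V, ∀ (u v : V) (hu : u ≠ x ∧ ¬ C.Adj x u) (hv : v ≠ x ∧ ¬ C.Adj x v),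
      (C.induce {w | w ≠ x ∧ ¬ C.Adj x w}).Reachable ⟨u, hu⟩ ⟨v, hv⟩ → u ≠ v → C.Adj u v)
    (a b c astar cstar : V)
    (hP4a : C.Adj astar a ∧ C.Adj a b ∧ C.Adj b c ∧
      ¬ C.Adj astar b ∧ ¬ C.Adj astar c ∧ ¬ C.Adj a c ∧
      ([astar, a, b, c] : List V).Nodup)
    (hP4c : C.Adj c cstar ∧ ¬ C.Adj a cstar ∧ ¬ C.Adj b cstar ∧
      ([a, b, c, cstar] : List V).Nodup)
    (hd : astar ≠ cstar) :
    C.Adj astar cstar ∧ ([astar, a, b, c, cstar] : List V).Nodup := by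
  obtain ⟨haa, hab, hbc, hab2, hac2, hac, hnd1⟩ := hP4a
  obtain ⟨hccs, hacs, hbcs, hnd2⟩ := hP4c
  simp only [List.nodup_cons, List.mem_cons, List.not_mem_nil, or_false,
    List.mem_singleton, not_or, List.nodup_nil, and_true, List.nodup_cons,
    List.not_mem_nil, not_false_iff] at hnd1 hnd2
  obtain ⟨⟨hsa, hsb, hsc⟩, ⟨hab', hac'⟩, hbc'⟩ := hnd1
  obtain ⟨⟨_, _, hacs'⟩, ⟨_, hbcs'⟩, hccs'⟩ := hnd2
  have key : C.Adj astar cstar := by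
    by_contra h
    have hmA : astar ≠ cstar ∧ ¬ C.Adj cstar astar := ⟨hd, fun h' => h h'.symm⟩
    have hmB : b ≠ cstar ∧ ¬ C.Adj cstar b := ⟨hbcs', fun h' => hbcs h'.symm⟩
    have hmAa : a ∈ {w | w ≠ cstar ∧ ¬ C.Adj cstar w} := ⟨hacs', fun h' => hacs h'.symm⟩
    have h1 : (C.induce {w | w ≠ cstar ∧ ¬ C.Adj cstar w}).Adj ⟨astar, hmA⟩ ⟨a, hmAa⟩ := by
      simp [haa]
    have h2 : (C.induce {w | w ≠ cstar ∧ ¬ C.Adj cstar w}).Adj ⟨a, hmAa⟩ ⟨b, hmB⟩ := by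
      simp [hab]
    have hreach : (C.induce {w | w ≠ cstar ∧ ¬ C.Adj cstar w}).Reachable ⟨astar, hmA⟩ ⟨b, hmB⟩ :=
      Reachable.trans h1.reachable h2.reachable
    exact hab2 (hcc cstar astar b hmA hmB hreach hsb)
  exact ⟨key, by simp [hsa, hsb, hsc, hd, hab', hac', hacs', hbc', hbcs', hccs']⟩
end

section
/- Let G be a graph and let U be an inclusion-maximal subset of V(G) such that G[U] is connected and G − N_G[U] contains an induced path on k vertices (k ≥ 1 fixed). Let (P̃, x, y) be an induced k-vertex path in G' = G − N_G[U] with endpoints x, y, and let (P̃', x', y') be an extension of it in G. Then it is impossible that exactly one of x', y' lies in N_G(U): if x' ∈ N_G(U) and y' ∈ V(G'), then U ∪ {x'} would induce a connected subgraph whose deleted closed neighborhood still contains an induced k-vertex path, contradicting maximality of U. -/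
open SimpleGraph

/-- A `P_k`-avoiding set: `G[U]` is connected and `G − N[U]` contains an induced
`k`-vertex path. -/
def PathAvoiding {V : Type} (G : SimpleGraph V) (k : ℕ) (U : Set V) : Prop :=
  (G.induce U).Connected ∧
    ∃ f : Fin k → V, IsCopy G (SimpleGraph.pathGraph k) f ∧
      ∀ i, f i ∈ (closedNbhd G U)ᶜ

/-!
If `x'` has a neighbour in `U` while `y'` lies outside `N[U]`, slide the path one step towards
`y'`: the vertices `f 1, …, f (k-1), y'` still form an induced `k`-vertex path, and none of them
is `x'` or adjacent to it, because `x'` sees the path only at `f 0` and is not adjacent to `y'`.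
So `U ∪ {x'}` is again path-avoiding, and strictly larger than `U`. The other case is the same
after reversing the path.
-/

lemma notMem_closedNbhd_insert {V : Type*} {G : SimpleGraph V} {S : Set V} {x v : V} :
    v ∉ closedNbhd G (insert x S) ↔ v ≠ x ∧ ¬ G.Adj x v ∧ v ∉ closedNbhd G S := by
  simp only [closedNbhd, Set.mem_union, Set.mem_insert_iff, Set.mem_ofPred_eq,
    exists_eq_or_imp, ne_eq, not_or]
  tauto

lemma SimpleGraph.connected_induce_insert {V : Type*} {G : SimpleGraph V} {U : Set V} {u x : V}
    (hU : (G.induce U).Connected) (hu : u ∈ U) (hux : G.Adj u x) :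
    (G.induce (insert x U)).Connected := by
  rw [← Set.union_singleton]
  exact connected_induce_union hU.preconnected .of_subsingleton hu rfl hux

namespace IsCopy

variable {V α β : Type*} {G : SimpleGraph V}

lemma comp {H : SimpleGraph α} {H' : SimpleGraph β} {f : α → V} {e : β → α}
    (hf : IsCopy G H f) (he : IsCopy H H' e) : IsCopy G H' (f ∘ e) :=
  ⟨hf.1.comp he.1, fun x y => (he.2 x y).trans (hf.2 (e x) (e y))⟩

lemma adj_iff {H : SimpleGraph α} {f : α → V} (hf : IsCopy G H f) {x y : α} :
    G.Adj (f x) (f y) ↔ H.Adj x y :=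
  (hf.2 x y).symm

end IsCopy

lemma isCopy_pathGraph_succ (n : ℕ) :
    IsCopy (pathGraph (n + 1)) (pathGraph n) Fin.succ :=
  ⟨Fin.succ_injective n, fun i j => by simp only [pathGraph_adj, Fin.val_succ]; omega⟩

lemma isCopy_pathGraph_rev (n : ℕ) : IsCopy (pathGraph n) (pathGraph n) Fin.rev :=
  ⟨Fin.rev_injective, fun i j => by simp only [pathGraph_adj, Fin.val_rev]; omega⟩

lemma IsCopy.pathGraph_snoc {V : Type*} {G : SimpleGraph V} {n : ℕ} {f : Fin (n + 1) → V}
    (hf : IsCopy G (pathGraph (n + 1)) f) {y : V} (hy : ∀ i, f i ≠ y)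
    (hadj : ∀ i, G.Adj (f i) y ↔ i = Fin.last n) :
    IsCopy G (pathGraph (n + 2)) (Fin.snoc f y : Fin (n + 2) → V) := by
  refine ⟨fun i j hij => ?_, fun i j => ?_⟩
  · induction i using Fin.lastCases <;> induction j using Fin.lastCases <;>
      simp_all [(hy _).symm, hf.1.eq_iff]
  · induction i using Fin.lastCases <;> induction j using Fin.lastCases <;>
      simp [hf.adj_iff, hadj, G.adj_comm y, pathGraph_adj, Fin.ext_iff] <;> omega

lemma IsExtension.adj_left_iff {V α : Type*} {G : SimpleGraph V} {H : SimpleGraph α}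
    {f : α → V} {s t : α} {s' t' : V} (hf : Function.Injective f)
    (h : IsExtension G H f s t s' t') (x : α) : G.Adj (f x) s' ↔ x = s :=
  ⟨fun hx => hf (not_imp_not.mp (h.2.2.2.2.2.2.1 x) hx), fun hx => hx ▸ h.2.2.2.2.1⟩

lemma IsExtension.adj_right_iff {V α : Type*} {G : SimpleGraph V} {H : SimpleGraph α}
    {f : α → V} {s t : α} {s' t' : V} (hf : Function.Injective f)
    (h : IsExtension G H f s t s' t') (x : α) : G.Adj (f x) t' ↔ x = t :=
  ⟨fun hx => hf (not_imp_not.mp (h.2.2.2.2.2.2.2 x) hx), fun hx => hx ▸ h.2.2.2.2.2.1⟩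

namespace IsCopy

variable {V : Type*} {G : SimpleGraph V} {n : ℕ} {f : Fin (n + 1) → V}

lemma exists_forall_of_pendant_last (hf : IsCopy G (pathGraph (n + 1)) f) {y : V}
    (hy : ∀ i, f i ≠ y) (hadj : ∀ i, G.Adj (f i) y ↔ i = Fin.last n) {P : V → Prop}
    (hP : ∀ i ≠ 0, P (f i)) (hPy : P y) :
    ∃ g, IsCopy G (pathGraph (n + 1)) g ∧ ∀ i, P (g i) := by
  refine ⟨Fin.snoc f y ∘ Fin.succ, (hf.pathGraph_snoc hy hadj).comp (isCopy_pathGraph_succ _),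
    fun i => ?_⟩
  induction i using Fin.lastCases with
  | last => simpa using hPy
  | cast j =>
    rw [Function.comp_apply, Fin.succ_castSucc, Fin.snoc_castSucc]
    exact hP j.succ (Fin.succ_ne_zero j)

lemma exists_forall_of_pendant_first (hf : IsCopy G (pathGraph (n + 1)) f) {x : V}
    (hx : ∀ i, f i ≠ x) (hadj : ∀ i, G.Adj (f i) x ↔ i = 0) {P : V → Prop}
    (hP : ∀ i ≠ Fin.last n, P (f i)) (hPx : P x) :
    ∃ g, IsCopy G (pathGraph (n + 1)) g ∧ ∀ i, P (g i) :=
  (hf.comp (isCopy_pathGraph_rev _)).exists_forall_of_pendant_last (fun i => hx i.rev)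
    (fun i => by simp [hadj, Fin.rev_eq_iff]) (fun i hi => hP i.rev (by simpa [Fin.rev_eq_iff]))
    hPx

end IsCopy

lemma notMem_openNbhd_of_maximal {V : Type} {G : SimpleGraph V} {k : ℕ} {U : Set V}
    (hU : (G.induce U).Connected) (hmax : ∀ U' : Set V, U ⊆ U' → PathAvoiding G k U' → U' = U)
    {g : Fin k → V} (hg : IsCopy G (pathGraph k) g) {x : V}
    (hgx : ∀ i, g i ∉ closedNbhd G (insert x U)) : x ∉ openNbhd G U := by
  rintro ⟨hxU, u, hu, hux⟩
  have hmaxU := hmax _ (Set.subset_insert x U) ⟨connected_induce_insert hU hu hux, g, hg, hgx⟩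
  exact hxU (hmaxU ▸ Set.mem_insert x U)

/-- if `U` is an inclusion-maximal `P_k`-avoiding set, `(P̃, x, y)` is an
induced `k`-vertex path in `G − N[U]` and `(P̃', x', y')` is an extension of it in `G`,
then it is impossible that exactly one of `x'`, `y'` lies in `N(U)`. -/
theorem stmt_17 {V : Type} (G : SimpleGraph V) (k : ℕ) (hk : 1 ≤ k)
    (U : Set V) (hU : PathAvoiding G k U)
    (hmax : ∀ U' : Set V, U ⊆ U' → PathAvoiding G k U' → U' = U)
    (f : Fin k → V) (hf : IsCopy G (SimpleGraph.pathGraph k) f)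
    (hfout : ∀ i, f i ∈ (closedNbhd G U)ᶜ)
    (x' y' : V)
    (hext : IsExtension G (SimpleGraph.pathGraph k) f ⟨0, by omega⟩ ⟨k - 1, by omega⟩ x' y') :
    ¬ (x' ∈ openNbhd G U ∧ y' ∉ closedNbhd G U) ∧
    ¬ (y' ∈ openNbhd G U ∧ x' ∉ closedNbhd G U) := by
  obtain ⟨n, rfl⟩ := Nat.exists_eq_add_of_le' hk
  change IsExtension G (pathGraph (n + 1)) f 0 (Fin.last n) x' y' at hext
  have hx'adj := hext.adj_left_iff hf.1
  have hy'adj := hext.adj_right_iff hf.1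
  obtain ⟨hne, hfx', hfy', hx'y', -⟩ := hext
  refine ⟨fun ⟨hx', hy'⟩ => ?_, fun ⟨hy', hx'⟩ => ?_⟩
  · obtain ⟨g, hg, hgx'⟩ := hf.exists_forall_of_pendant_last hfy' hy'adj
      (P := (· ∉ closedNbhd G (insert x' U)))
      (fun i hi => notMem_closedNbhd_insert.2 ⟨hfx' i, by rwa [G.adj_comm, hx'adj], hfout i⟩)
      (notMem_closedNbhd_insert.2 ⟨hne.symm, hx'y', hy'⟩)
    exact notMem_openNbhd_of_maximal hU.1 hmax hg hgx' hx'
  · obtain ⟨g, hg, hgy'⟩ := hf.exists_forall_of_pendant_first hfx' hx'adj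
      (P := (· ∉ closedNbhd G (insert y' U)))
      (fun i hi => notMem_closedNbhd_insert.2 ⟨hfy' i, by rwa [G.adj_comm, hy'adj], hfout i⟩)
      (notMem_closedNbhd_insert.2 ⟨hne, fun h => hx'y' h.symm, hx'⟩)
    exact notMem_openNbhd_of_maximal hU.1 hmax hg hgy' hy'
end
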